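/- arXiv:2401.13760 — 5 statements merged into one kernel-verified Lean document; each statement's English description precedes it below -/
import Mathlib

section
/- Let M ~ NB(k+1, θ) and N ≥ k+1 an integer. Then E(M(M+1) · 1[M ≤ N]) = ((k+1)(k+2)/θ²) · P(M̃ ≤ N+2), where M̃ ~ NB(k+3, θ). -/
/-- The pmf of the negative binomial distribution `NB(r, θ)`:
`P(M = j) = C(j−1, r−1) θ^r (1−θ)^{j−r}` for `j ≥ r`. -/
noncomputable def nbPmf (r : ℕ) (θ : ℝ) (j : ℕ) : ℝ :=
  if r ≤ j then ((j - 1).choose (r - 1) : ℝ) * θ ^ r * (1 - θ) ^ (j - r) else 0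

lemma nb_choose_aux (k m : ℕ) :
    (m + 1) * (m + 2) * Nat.choose m k = (k + 1) * (k + 2) * Nat.choose (m + 2) (k + 2) := by
  have h1 : (m + 1) * Nat.choose m k = Nat.choose (m + 1) (k + 1) * (k + 1) :=
    Nat.add_one_mul_choose_eq m k
  have h2 : (m + 2) * Nat.choose (m + 1) (k + 1) = Nat.choose (m + 2) (k + 2) * (k + 2) :=
    Nat.add_one_mul_choose_eq (m + 1) (k + 1)
  calc (m + 1) * (m + 2) * Nat.choose m k
      = (m + 2) * ((m + 1) * Nat.choose m k) := by ring
    _ = (m + 2) * (Nat.choose (m + 1) (k + 1) * (k + 1)) := by rw [h1]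
    _ = (k + 1) * ((m + 2) * Nat.choose (m + 1) (k + 1)) := by ring
    _ = (k + 1) * (Nat.choose (m + 2) (k + 2) * (k + 2)) := by rw [h2]
    _ = (k + 1) * (k + 2) * Nat.choose (m + 2) (k + 2) := by ring

/-- For `M ~ NB(k+1, θ)` and `N ≥ k+1`,
`E(M(M+1) · 1[M ≤ N]) = ((k+1)(k+2)/θ²) · P(M̃ ≤ N+2)` where `M̃ ~ NB(k+3, θ)`. -/
theorem negBinomial_truncated_second_factorial_moment (k N : ℕ) (hN : k + 1 ≤ N)
    (θ : ℝ) (hθ0 : 0 < θ) (hθ1 : θ < 1) :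
    (∑ j ∈ Finset.Icc (k + 1) N, (j : ℝ) * ((j : ℝ) + 1) * nbPmf (k + 1) θ j)
      = ((k + 1) * (k + 2) / θ ^ 2) * ∑ j ∈ Finset.Icc (k + 3) (N + 2), nbPmf (k + 3) θ j := by
  have hshift : Finset.Icc (k + 3) (N + 2) = (Finset.Icc (k + 1) N).map
      (addRightEmbedding 2) := by
    rw [Finset.map_add_right_Icc]
  rw [hshift, Finset.sum_map, Finset.mul_sum]
  apply Finset.sum_congr rfl
  intro i hi
  obtain ⟨hi1, hi2⟩ := Finset.mem_Icc.mp hi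
  obtain ⟨m, rfl⟩ : ∃ m, i = m + 1 := ⟨i - 1, by omega⟩
  simp only [addRightEmbedding_apply, nbPmf]
  rw [if_pos (by omega : k + 1 ≤ m + 1), if_pos (by omega : k + 3 ≤ m + 1 + 2)]
  have hc1 : (m + 1) - 1 = m := by omega
  have hc2 : (m + 1 + 2) - 1 = m + 2 := by omega
  have hc3 : (m + 1) - (k + 1) = m - k := by omega
  have hc4 : (m + 1 + 2) - (k + 3) = m - k := by omega
  rw [hc1, hc2, hc3, hc4]
  have hkey : ((m : ℝ) + 1) * ((m : ℝ) + 1 + 1) * (Nat.choose m k : ℝ)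
      = ((k : ℝ) + 1) * ((k : ℝ) + 2) * (Nat.choose (m + 2) (k + 2) : ℝ) := by
    have := nb_choose_aux k m
    exact_mod_cast congrArg (Nat.cast : ℕ → ℝ) this
  have hθ : (θ : ℝ) ≠ 0 := ne_of_gt hθ0
  have hpow : θ ^ (k + 3) = θ ^ (k + 1) * θ ^ 2 := by ring
  push_cast
  rw [hpow]
  field_simp
  linear_combination ((1 - θ) ^ (m - k)) * hkey
end

section
/- Let M_k be the stopping time for k+1 successes among i.i.d. Bernoulli(θ) trials (so M_k ~ NB(k+1, θ)), let N ≥ k+1, and set M* = min(M_k, N). Then E(M*) = N · I_{1−θ}(N−k, k+1) + ((k+1)/θ) · I_θ(k+2, N−k), where I is the regularized incomplete beta function. -/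
open MeasureTheory intervalIntegral

/-- The regularized incomplete beta function `I_x(a, b)` (for positive integer parameters). -/
noncomputable def regIncBeta (x : ℝ) (a b : ℕ) : ℝ :=
  (∫ u in (0:ℝ)..x, u ^ (a - 1) * (1 - u) ^ (b - 1)) /
    (∫ u in (0:ℝ)..(1:ℝ), u ^ (a - 1) * (1 - u) ^ (b - 1))

open Finset

lemma nat_id1 (n i : ℕ) (hi : 1 ≤ i) : n * (n-1).choose (i-1) = i * n.choose i := by
  rcases Nat.eq_zero_or_pos n with hn | hn
  · subst hn; simp [Nat.choose_eq_zero_of_lt (show (0:ℕ) < i by omega)]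
  · have h := Nat.add_one_mul_choose_eq (n-1) (i-1)
    rw [show n - 1 + 1 = n by omega, show i - 1 + 1 = i by omega] at h
    rw [h, Nat.mul_comm]

lemma nat_id2 (n i : ℕ) : n * (n-1).choose i = (n - i) * n.choose i := by
  rcases Nat.eq_zero_or_pos n with hn | hn
  · subst hn; simp
  rcases Nat.lt_or_ge i n with h | h
  · have h1 : i ≤ n - 1 := by omega
    have h2 := Nat.add_one_mul_choose_eq (n-1) (n-1-i)
    rw [show n - 1 + 1 = n by omega, show n - 1 - i + 1 = n - i by omega] at h2
    rw [← Nat.choose_symm h1, h2, Nat.choose_symm (show i ≤ n by omega), Nat.mul_comm]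
  · rcases Nat.eq_or_lt_of_le h with rfl | h'
    · simp [Nat.choose_eq_zero_of_lt (show n - 1 < n by omega)]
    · rw [Nat.choose_eq_zero_of_lt (show n - 1 < i by omega),
        Nat.choose_eq_zero_of_lt h']
      simp

lemma telescope_Icc (A : ℕ → ℝ) (a n : ℕ) (han : a ≤ n) :
    ∑ i ∈ Icc a n, (A i - A (i+1)) = A a - A (n+1) := by
  induction n, han using Nat.le_induction with
  | base => simp
  | succ n hn ih =>
      rw [Finset.sum_Icc_succ_top (by omega), ih]; ring

lemma binSum_deriv (a n : ℕ) (ha : 1 ≤ a) (han : a ≤ n) (x : ℝ) :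
    HasDerivAt (fun y : ℝ => ∑ i ∈ Icc a n, (n.choose i : ℝ) * y ^ i * (1 - y) ^ (n - i))
      ((n * (n-1).choose (a-1) : ℕ) * (x ^ (a-1) * (1-x) ^ (n-a))) x := by
  set A : ℕ → ℝ := fun i => ((n * (n-1).choose (i-1) : ℕ) : ℝ) * (x ^ (i-1) * (1-x) ^ (n-i))
    with hA
  have key : ∀ i ∈ Icc a n, HasDerivAt
      (fun y : ℝ => (n.choose i : ℝ) * y ^ i * (1 - y) ^ (n - i)) (A i - A (i+1)) x := by
    intro i hi
    simp only [mem_Icc] at hi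
    have h1 : HasDerivAt (fun y : ℝ => (n.choose i : ℝ) * y ^ i)
        ((n.choose i : ℝ) * ((i:ℝ) * x ^ (i-1))) x := (hasDerivAt_pow i x).const_mul _
    have h2 : HasDerivAt (fun y : ℝ => (1 - y) ^ (n - i))
        ((((n-i : ℕ)):ℝ) * (1-x)^(n-i-1) * (-1)) x := by
      exact HasDerivAt.comp x (hasDerivAt_pow (n-i) (1-x)) ((hasDerivAt_id x).const_sub 1)
    have h3 := h1.fun_mul h2
    refine h3.congr_deriv ?_
    have e1 : ((n * (n-1).choose (i-1) : ℕ) : ℝ) = (i:ℝ) * (n.choose i : ℝ) := by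
      rw [nat_id1 n i (by omega)]; push_cast; ring
    have e2 : ((n * (n-1).choose i : ℕ) : ℝ) = (((n-i:ℕ)):ℝ) * (n.choose i : ℝ) := by
      rw [nat_id2 n i, Nat.cast_mul]
    have hi1 : i + 1 - 1 = i := by omega
    have hi2 : n - (i+1) = n - i - 1 := by omega
    simp only [hA, hi1, hi2, e2]
    rw [e1]
    ring
  have hsum := HasDerivAt.fun_sum key
  rw [telescope_Icc A a n han] at hsum
  have hz : A (n+1) = 0 := by
    simp only [hA, Nat.add_sub_cancel]
    rw [Nat.choose_eq_zero_of_lt (show n - 1 < n by omega)]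
    simp
  rw [hz, sub_zero] at hsum
  exact hsum

lemma intP1 (a n : ℕ) (ha : 1 ≤ a) (han : a ≤ n) (x : ℝ) :
    ((n * (n-1).choose (a-1) : ℕ) : ℝ) * (∫ u in (0:ℝ)..x, u ^ (a-1) * (1-u) ^ (n-a))
      = ∑ i ∈ Icc a n, (n.choose i : ℝ) * x ^ i * (1 - x) ^ (n - i) := by
  have hcont : Continuous (fun u : ℝ =>
      ((n * (n-1).choose (a-1) : ℕ) : ℝ) * (u ^ (a-1) * (1-u) ^ (n-a))) := by fun_prop
  have h := intervalIntegral.integral_eq_sub_of_hasDerivAt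
    (f := fun y : ℝ => ∑ i ∈ Icc a n, (n.choose i : ℝ) * y ^ i * (1 - y) ^ (n - i))
    (f' := fun y : ℝ => ((n * (n-1).choose (a-1) : ℕ) : ℝ) * (y ^ (a-1) * (1-y) ^ (n-a)))
    (a := 0) (b := x)
    (fun y _ => binSum_deriv a n ha han y)
    (hcont.intervalIntegrable 0 x)
  rw [intervalIntegral.integral_const_mul] at h
  have h0 : (fun y : ℝ => ∑ i ∈ Icc a n, (n.choose i : ℝ) * y ^ i * (1 - y) ^ (n - i)) 0
      = 0 := by
    simp only
    apply Finset.sum_eq_zero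
    intro i hi
    simp only [mem_Icc] at hi
    rw [zero_pow (show i ≠ 0 by omega)]
    ring
  simp only at h0
  rw [h, h0, sub_zero]

lemma sum_bin_one (a n : ℕ) (han : a ≤ n) :
    ∑ i ∈ Icc a n, (n.choose i : ℝ) * (1:ℝ) ^ i * (1 - 1) ^ (n - i) = 1 := by
  rw [Finset.sum_eq_single n]
  · simp
  · intro i hi hne
    simp only [mem_Icc] at hi
    rw [sub_self, zero_pow (show n - i ≠ 0 by omega)]
    ring
  · intro h; exact absurd (mem_Icc.mpr ⟨han, le_refl n⟩) h

lemma regIncBeta_eq (a b : ℕ) (ha : 1 ≤ a) (hb : 1 ≤ b) (x : ℝ) :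
    regIncBeta x a b
      = ∑ i ∈ Icc a (a+b-1), ((a+b-1).choose i : ℝ) * x ^ i * (1 - x) ^ (a+b-1-i) := by
  set n := a + b - 1 with hn
  have han : a ≤ n := by omega
  have hba : b - 1 = n - a := by omega
  have hcpos : (0:ℝ) < ((n * (n-1).choose (a-1) : ℕ) : ℝ) := by
    have h1 : a - 1 ≤ n - 1 := by omega
    have h2 : 0 < n * (n-1).choose (a-1) := Nat.mul_pos (by omega) (Nat.choose_pos h1)
    exact_mod_cast h2
  have h1 := intP1 a n ha han x
  have h2 := intP1 a n ha han 1
  rw [sum_bin_one a n han] at h2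
  rw [regIncBeta, hba, ← h1]
  have hint1 : (∫ u in (0:ℝ)..(1:ℝ), u ^ (a-1) * (1-u) ^ (n-a))
      = 1 / ((n * (n-1).choose (a-1) : ℕ) : ℝ) := by
    rw [eq_div_iff hcpos.ne', mul_comm]
    exact h2
  rw [hint1]
  field_simp

lemma nb_cdf (r : ℕ) (hr : 1 ≤ r) (θ : ℝ) (n : ℕ) (hn : r ≤ n) :
    ∑ j ∈ Icc r n, nbPmf r θ j
      = ∑ i ∈ Icc r n, (n.choose i : ℝ) * θ ^ i * (1-θ) ^ (n-i) := by
  induction n, hn using Nat.le_induction with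
  | base =>
      simp only [Icc_self, sum_singleton, nbPmf, if_pos (le_refl r), Nat.choose_self,
        Nat.sub_self, pow_zero]
  | succ n hn ih =>
      rw [Finset.sum_Icc_succ_top (show r ≤ n+1 by omega)]
      have pascal : ∀ i ∈ Icc r (n+1), ((n+1).choose i : ℝ) * θ^i * (1-θ)^(n+1-i)
          = (n.choose i : ℝ)*θ^i*(1-θ)^(n+1-i) + (n.choose (i-1):ℝ)*θ^i*(1-θ)^(n+1-i) := by
        intro i hi
        simp only [mem_Icc] at hi
        have h1 : (n+1).choose i = n.choose (i-1) + n.choose i := by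
          conv_lhs => rw [show i = (i-1)+1 by omega]
          rw [Nat.choose_succ_succ, Nat.succ_eq_add_one, show i-1+1 = i by omega]
        rw [h1]; push_cast; ring
      rw [Finset.sum_congr rfl pascal, Finset.sum_add_distrib]
      have hS1 : ∑ i ∈ Icc r (n+1), (n.choose i : ℝ)*θ^i*(1-θ)^(n+1-i)
          = (1-θ) * ∑ i ∈ Icc r n, (n.choose i : ℝ)*θ^i*(1-θ)^(n-i) := by
        rw [Finset.sum_Icc_succ_top (show r ≤ n+1 by omega),
          Nat.choose_eq_zero_of_lt (Nat.lt_succ_self n)]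
        simp only [Nat.cast_zero, zero_mul, add_zero]
        rw [Finset.mul_sum]
        apply Finset.sum_congr rfl
        intro i hi
        simp only [mem_Icc] at hi
        rw [show n+1-i = (n-i)+1 by omega, pow_succ]
        ring
      have hS2 : ∑ i ∈ Icc r (n+1), (n.choose (i-1) : ℝ)*θ^i*(1-θ)^(n+1-i)
          = θ * ((n.choose (r-1) : ℝ)*θ^(r-1)*(1-θ)^(n-(r-1))
              + ∑ i ∈ Icc r n, (n.choose i : ℝ)*θ^i*(1-θ)^(n-i)) := by
        have hbij : ∑ i ∈ Icc r (n+1), (n.choose (i-1) : ℝ)*θ^i*(1-θ)^(n+1-i)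
            = ∑ m ∈ Icc (r-1) n, (n.choose m : ℝ)*θ^(m+1)*(1-θ)^(n-m) := by
          rw [show Icc r (n+1) = (Icc (r-1) n).map (addRightEmbedding 1) from ?_]
          · rw [Finset.sum_map]
            apply Finset.sum_congr rfl
            intro m hm
            simp only [addRightEmbedding_apply, Nat.add_sub_cancel, Nat.succ_sub_succ_eq_sub, Nat.sub_zero]
          · rw [Finset.map_add_right_Icc]
            congr 1
            omega
        rw [hbij]
        have hins : Icc (r-1) n = insert (r-1) (Icc r n) := by
          ext m; simp only [mem_Icc, mem_insert]; omega
        rw [hins, Finset.sum_insert (by simp only [mem_Icc]; omega), mul_add, Finset.mul_sum]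
        congr 1
        · rw [pow_succ]; ring
        · apply Finset.sum_congr rfl
          intro i hi
          rw [pow_succ]; ring
      rw [hS1, hS2, ih]
      have hnb : nbPmf r θ (n+1) = (n.choose (r-1):ℝ) * θ^r * (1-θ)^(n+1-r) := by
        rw [nbPmf, if_pos (show r ≤ n+1 by omega), Nat.add_sub_cancel]
      rw [hnb, show n - (r-1) = n+1-r by omega,
        show (θ:ℝ)^r = θ^(r-1)*θ by rw [← pow_succ, show r-1+1 = r by omega]]
      ring

lemma bin_split (k N : ℕ) (hN : k+1 ≤ N) (θ : ℝ) :
    ∑ i ∈ Icc (k+1) N, (N.choose i : ℝ) * θ^i * (1-θ)^(N-i)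
      = 1 - ∑ i ∈ Icc (N-k) N, (N.choose i : ℝ) * (1-θ)^i * θ^(N-i) := by
  have htot : ∑ i ∈ range (N+1), (N.choose i:ℝ) * θ^i * (1-θ)^(N-i) = 1 := by
    have h := add_pow θ (1-θ) N
    rw [show θ + (1-θ) = 1 by ring, one_pow] at h
    have h2 : ∑ i ∈ range (N+1), (N.choose i:ℝ)*θ^i*(1-θ)^(N-i)
        = ∑ m ∈ range (N+1), θ^m*(1-θ)^(N-m)*(N.choose m:ℝ) :=
      Finset.sum_congr rfl (fun i _ => by ring)
    rw [h2]
    exact h.symm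
  have hsplit : ∑ i ∈ range (N+1), (N.choose i:ℝ) * θ^i * (1-θ)^(N-i)
      = ∑ i ∈ range (k+1), (N.choose i:ℝ) * θ^i * (1-θ)^(N-i)
        + ∑ i ∈ Icc (k+1) N, (N.choose i:ℝ) * θ^i * (1-θ)^(N-i) := by
    rw [Finset.range_eq_Ico, ← Finset.sum_Ico_consecutive _ (show 0 ≤ k+1 by omega)
      (show k+1 ≤ N+1 by omega), ← Finset.range_eq_Ico, Finset.Ico_add_one_right_eq_Icc]
  have hmap : ∑ i ∈ range (k+1), (N.choose i:ℝ)*θ^i*(1-θ)^(N-i)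
      = ∑ i ∈ Icc (N-k) N, (N.choose i:ℝ)*(1-θ)^i*θ^(N-i) := by
    apply Finset.sum_nbij' (fun i => N - i) (fun i => N - i)
    · intro i hi; simp only [mem_range] at hi; simp only [mem_Icc]; omega
    · intro i hi; simp only [mem_Icc] at hi; simp only [mem_range]; omega
    · intro i hi; simp only [mem_range] at hi; omega
    · intro i hi; simp only [mem_Icc] at hi; omega
    · intro i hi
      simp only [mem_range] at hi
      rw [Nat.choose_symm (show i ≤ N by omega), show N - (N - i) = i by omega]
      ring
  rw [hsplit, hmap] at htot
  linarith [htot]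

lemma j_mul (k : ℕ) (θ : ℝ) (hθ : θ ≠ 0) (j : ℕ) :
    (j : ℝ) * nbPmf (k+1) θ j = (((k:ℝ)+1)/θ) * nbPmf (k+2) θ (j+1) := by
  unfold nbPmf
  by_cases h : k + 1 ≤ j
  · rw [if_pos h, if_pos (show k+2 ≤ j+1 by omega)]
    have hch : j * (j-1).choose k = (k+1) * j.choose (k+1) := by
      have h2 := Nat.add_one_mul_choose_eq (j-1) k
      rw [show j - 1 + 1 = j by omega] at h2
      rw [h2, Nat.mul_comm]
    have hc : (j:ℝ) * ((j-1).choose k : ℝ) = ((k:ℝ)+1) * (j.choose (k+1) : ℝ) := by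
      exact_mod_cast hch
    rw [show j + 1 - 1 = j by omega, show k + 2 - 1 = k + 1 from rfl,
      show j + 1 - (k+2) = j - (k+1) by omega, show k + 1 - 1 = k from rfl]
    rw [show (θ:ℝ)^(k+2) = θ * θ^(k+1) by ring, div_mul_eq_mul_div, eq_div_iff hθ]
    linear_combination (θ * θ^(k+1) * (1-θ)^(j-(k+1))) * hc
  · rw [if_neg h, if_neg (show ¬ (k+2 ≤ j+1) by omega)]
    ring

lemma nbPmf_hasSum (r : ℕ) (hr : 1 ≤ r) (θ : ℝ) (h0 : 0 < θ) (h1 : θ < 1) :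
    HasSum (nbPmf r θ) 1 := by
  have hnorm : ‖1 - θ‖ < 1 := by
    rw [Real.norm_eq_abs, abs_lt]; constructor <;> linarith
  have h := (hasSum_choose_mul_geometric_of_norm_lt_one (𝕜 := ℝ) (r-1) hnorm).mul_left (θ^r)
  have hval : θ^r * (1/(1-(1-θ))^((r-1)+1)) = 1 := by
    rw [sub_sub_cancel, show r - 1 + 1 = r by omega]
    field_simp
  rw [hval] at h
  have heq : (fun n => θ^r * (((n + (r-1)).choose (r-1):ℝ) * (1-θ)^n))
      = fun n => nbPmf r θ (n + r) := by
    funext n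
    rw [nbPmf, if_pos (by omega)]
    rw [show n + r - 1 = n + (r-1) by omega, show n + r - r = n by omega]
    ring
  rw [heq] at h
  have h2 := (hasSum_nat_add_iff (f := nbPmf r θ) r).mp h
  have h3 : ∑ i ∈ range r, nbPmf r θ i = 0 := by
    apply Finset.sum_eq_zero
    intro i hi
    simp only [mem_range] at hi
    rw [nbPmf, if_neg (by omega)]
  rw [h3, add_zero] at h2
  exact h2

/-- For `M_k ~ NB(k+1, θ)`, `N ≥ k+1` and `M* = min(M_k, N)`,
`E(M*) = N · I_{1−θ}(N−k, k+1) + ((k+1)/θ) · I_θ(k+2, N−k)`. -/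
theorem ASN_formula (k N : ℕ) (hN : k + 1 ≤ N) (θ : ℝ) (hθ0 : 0 < θ) (hθ1 : θ < 1) :
    (∑' j : ℕ, (min j N : ℝ) * nbPmf (k + 1) θ j)
      = N * regIncBeta (1 - θ) (N - k) (k + 1)
        + ((k + 1) / θ) * regIncBeta θ (k + 2) (N - k) := by
  have hθ : θ ≠ 0 := ne_of_gt hθ0
  have hp : HasSum (nbPmf (k+1) θ) 1 := nbPmf_hasSum (k+1) (by omega) θ hθ0 hθ1
  have h1 : HasSum (fun j => (N:ℝ) * nbPmf (k+1) θ j) (N:ℝ) := by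
    simpa using hp.mul_left (N:ℝ)
  have hq0 : ∀ j ∉ Icc (k+1) N,
      ((min j N : ℕ):ℝ) * nbPmf (k+1) θ j - (N:ℝ) * nbPmf (k+1) θ j = 0 := by
    intro j hj
    simp only [mem_Icc, not_and, not_le] at hj
    by_cases hjk : k + 1 ≤ j
    · have hjN : N < j := hj hjk
      rw [min_eq_right (le_of_lt hjN)]
      ring
    · rw [nbPmf, if_neg hjk]
      ring
  have h2 : HasSum (fun j => ((min j N : ℕ):ℝ) * nbPmf (k+1) θ j - (N:ℝ) * nbPmf (k+1) θ j)
      (∑ j ∈ Icc (k+1) N,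
        (((min j N : ℕ):ℝ) * nbPmf (k+1) θ j - (N:ℝ) * nbPmf (k+1) θ j)) :=
    hasSum_sum_of_ne_finset_zero hq0
  have h3 := h1.add h2
  have hfun : (fun j => (N:ℝ) * nbPmf (k+1) θ j
        + (((min j N : ℕ):ℝ) * nbPmf (k+1) θ j - (N:ℝ) * nbPmf (k+1) θ j))
      = fun j => ((min j N : ℕ):ℝ) * nbPmf (k+1) θ j := by
    funext j; ring
  rw [hfun] at h3
  simp only [← Nat.cast_min]
  rw [h3.tsum_eq]
  -- rewrite the finite sum
  have hsum : ∑ j ∈ Icc (k+1) N,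
      (((min j N : ℕ):ℝ) * nbPmf (k+1) θ j - (N:ℝ) * nbPmf (k+1) θ j)
      = (∑ j ∈ Icc (k+1) N, (j:ℝ) * nbPmf (k+1) θ j)
        - (N:ℝ) * ∑ j ∈ Icc (k+1) N, nbPmf (k+1) θ j := by
    rw [Finset.sum_sub_distrib, ← Finset.mul_sum]
    congr 1
    apply Finset.sum_congr rfl
    intro j hj
    simp only [mem_Icc] at hj
    rw [min_eq_left hj.2]
  rw [hsum]
  -- e1 : the mean part
  have e1 : ∑ j ∈ Icc (k+1) N, (j:ℝ) * nbPmf (k+1) θ j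
      = (((k:ℝ)+1)/θ) * regIncBeta θ (k+2) (N-k) := by
    have step1 : ∑ j ∈ Icc (k+1) N, (j:ℝ) * nbPmf (k+1) θ j
        = (((k:ℝ)+1)/θ) * ∑ j ∈ Icc (k+1) N, nbPmf (k+2) θ (j+1) := by
      rw [Finset.mul_sum]
      exact Finset.sum_congr rfl (fun j _ => j_mul k θ hθ j)
    have step2 : ∑ j ∈ Icc (k+1) N, nbPmf (k+2) θ (j+1)
        = ∑ m ∈ Icc (k+2) (N+1), nbPmf (k+2) θ m := by
      rw [show Icc (k+2) (N+1) = (Icc (k+1) N).map (addRightEmbedding 1) from by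
        rw [Finset.map_add_right_Icc], Finset.sum_map]
      rfl
    have step3 := nb_cdf (k+2) (by omega) θ (N+1) (by omega)
    have step4 := regIncBeta_eq (k+2) (N-k) (by omega) (by omega) θ
    rw [show k+2+(N-k)-1 = N+1 by omega] at step4
    rw [step1, step2, step3, ← step4]
  -- e2 : the tail part
  have e2 : ∑ j ∈ Icc (k+1) N, nbPmf (k+1) θ j
      = 1 - regIncBeta (1-θ) (N-k) (k+1) := by
    have step1 := nb_cdf (k+1) (by omega) θ N (by omega)
    have step2 := bin_split k N hN θ
    have step3 := regIncBeta_eq (N-k) (k+1) (by omega) (by omega) (1-θ)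
    rw [show N-k+(k+1)-1 = N by omega, sub_sub_cancel] at step3
    rw [step1, step2, ← step3]
  rw [e1, e2]
  ring
end

section
/- With M_k ~ NB(k+1, θ), N ≥ k+1, and M* = min(M_k, N), E((M*)²) = N² · I_{1−θ}(N−k, k+1) + ((k+1)(k+2)/θ²) · I_θ(k+3, N−k) − ((k+1)/θ) · I_θ(k+2, N−k). -/
/-!
The identity `θ · j · P(NB(s+1) = j) = (s+1) · P(NB(s+2) = j+1)`, applied twice to
`j² = (j+1)j − j`, turns the second moment of `M_k` below `N` into values of the distribution
functions of `NB(k+2)` and `NB(k+3)`; the mass above `N` contributes `N² · P(M_k > N)`.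
As a polynomial in `θ`, the distribution function `P(NB(r) ≤ n)` has the telescoping derivative
`r · C(n, r) · θ^(r-1) (1-θ)^(n-r)` and vanishes at `0`, so it equals `I_θ(r, n-r+1)`; the
reflection `u ↦ 1 - u` of the beta integrand gives `1 - I_θ(a, b) = I_{1-θ}(b, a)`.
-/

open MeasureTheory intervalIntegral

open Finset

lemma tsum_comp_min_mul (g : ℕ → ℝ) {p : ℕ → ℝ} (hp : HasSum p 1) (N : ℕ) :
    ∑' j, g (min j N) * p j
      = ∑ j ∈ range (N + 1), g j * p j + g N * (1 - ∑ j ∈ range (N + 1), p j) := by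
  have htail : HasSum (fun j => g (min (j + (N + 1)) N) * p (j + (N + 1)))
      (g N * (1 - ∑ j ∈ range (N + 1), p j)) := by
    have hmin (j : ℕ) : min (j + (N + 1)) N = N := min_eq_right (by omega)
    simpa only [hmin] using
      ((hasSum_nat_add_iff' (N + 1)).2 hp).mul_left (g N)
  rw [((hasSum_nat_add_iff (f := fun j => g (min j N) * p j) (N + 1)).1 htail).tsum_eq,
    add_comm]
  congr 1
  exact sum_congr rfl fun j hj => by rw [min_eq_left (by simp at hj; omega)]

lemma nbPmf_of_lt {r j : ℕ} (θ : ℝ) (h : j < r) : nbPmf r θ j = 0 :=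
  if_neg (by omega)

lemma nbPmf_add_succ (s t : ℕ) (θ : ℝ) :
    nbPmf (s + 1) θ (t + (s + 1)) = (t + s).choose s * θ ^ (s + 1) * (1 - θ) ^ t := by
  rw [nbPmf, if_pos (by omega), show t + (s + 1) - 1 = t + s by omega, Nat.add_sub_cancel,
    Nat.add_sub_cancel]

lemma hasSum_nbPmf (s : ℕ) {θ : ℝ} (hθ : |1 - θ| < 1) : HasSum (nbPmf (s + 1) θ) 1 := by
  have hθ0 : θ ≠ 0 := by rintro rfl; norm_num at hθ
  rw [← hasSum_nat_add_iff' (s + 1), sum_eq_zero fun j hj => nbPmf_of_lt θ (mem_range.1 hj),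
    sub_zero]
  have h := (hasSum_choose_mul_geometric_of_norm_lt_one s (r := 1 - θ) hθ).mul_left (θ ^ (s + 1))
  rw [sub_sub_cancel, mul_one_div, div_self (pow_ne_zero _ hθ0)] at h
  simpa only [nbPmf_add_succ, mul_assoc, mul_left_comm] using h

lemma mul_natCast_mul_nbPmf (s j : ℕ) (θ : ℝ) :
    θ * (j * nbPmf (s + 1) θ j) = (s + 1) * nbPmf (s + 2) θ (j + 1) := by
  rcases lt_or_ge j (s + 1) with hj | hj
  · rw [nbPmf_of_lt θ hj, nbPmf_of_lt θ (by omega)]; ring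
  obtain ⟨t, rfl⟩ := Nat.exists_eq_add_of_le' hj
  have hchoose :
      ((t + s + 1 : ℕ) : ℝ) * (t + s).choose s = (t + s + 1).choose (s + 1) * (s + 1) := by
    exact_mod_cast Nat.add_one_mul_choose_eq (t + s) s
  rw [nbPmf_add_succ, show t + (s + 1) + 1 = t + (s + 1 + 1) by omega, nbPmf_add_succ]
  push_cast at hchoose ⊢
  rw [show t + (s + 1) = t + s + 1 by omega]
  linear_combination θ ^ (s + 2) * (1 - θ) ^ t * hchoose

lemma mul_sq_mul_nbPmf (s j : ℕ) (θ : ℝ) :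
    θ ^ 2 * ((j : ℝ) ^ 2 * nbPmf (s + 1) θ j)
      = (s + 1) * (s + 2) * nbPmf (s + 3) θ (j + 2)
        - θ * (s + 1) * nbPmf (s + 2) θ (j + 1) := by
  have h₁ := mul_natCast_mul_nbPmf s j θ
  have h₂ := mul_natCast_mul_nbPmf (s + 1) (j + 1) θ
  push_cast at h₂
  linear_combination (θ * (j + 1) - θ) * h₁ + (s + 1) * h₂

lemma sum_range_nbPmf_add {r d : ℕ} (h : d ≤ r) (θ : ℝ) (n : ℕ) :
    ∑ j ∈ range n, nbPmf r θ (j + d) = ∑ j ∈ range (n + d), nbPmf r θ j := by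
  rw [add_comm n d, sum_range_add,
    sum_eq_zero (s := range d) fun j hj => nbPmf_of_lt θ ((mem_range.1 hj).trans_le h), zero_add]
  simp only [add_comm]

lemma sum_range_sq_mul_nbPmf (s n : ℕ) (θ : ℝ) :
    θ ^ 2 * ∑ j ∈ range (n + 1), (j : ℝ) ^ 2 * nbPmf (s + 1) θ j
      = (s + 1) * (s + 2) * ∑ j ∈ range (n + 2 + 1), nbPmf (s + 3) θ j
        - θ * (s + 1) * ∑ j ∈ range (n + 1 + 1), nbPmf (s + 2) θ j := by
  simp only [mul_sum, mul_sq_mul_nbPmf, sum_sub_distrib]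
  rw [← mul_sum, ← mul_sum, ← mul_sum, ← mul_sum, sum_range_nbPmf_add (by omega),
    sum_range_nbPmf_add (by omega), add_right_comm n 2 1]

lemma hasDerivAt_sum_choose_mul_pow (s m : ℕ) (x : ℝ) :
    HasDerivAt
      (fun y : ℝ => ∑ t ∈ range (m + 1), ((t + s).choose s : ℝ) * y ^ (s + 1) * (1 - y) ^ t)
      ((s + 1) * (m + s + 1).choose (s + 1) * (x ^ s * (1 - x) ^ m)) x := by
  induction m with
  | zero => simpa using (hasDerivAt_pow (s + 1) x).const_mul (1 : ℝ)
  | succ m ih =>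
    simp only [sum_range_succ _ (m + 1)]
    have hterm :
        HasDerivAt (fun y : ℝ => ((m + 1 + s).choose s : ℝ) * y ^ (s + 1) * (1 - y) ^ (m + 1))
        (((m + 1 + s).choose s : ℝ) * ((s + 1) * x ^ s * (1 - x) ^ (m + 1)
          - x ^ (s + 1) * ((m + 1) * (1 - x) ^ m))) x := by
      have := (((hasDerivAt_pow (s + 1) x).const_mul ((m + 1 + s).choose s : ℝ)).mul
        (((hasDerivAt_id x).const_sub 1).pow (m + 1)))
      refine this.congr_deriv ?_
      simp only [Pi.pow_apply, id, Nat.add_sub_cancel]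
      push_cast
      ring
    refine (ih.add hterm).congr_deriv ?_
    have hpascal : ((m + s + 1 + 1).choose (s + 1) : ℝ)
        = (m + s + 1).choose s + (m + s + 1).choose (s + 1) := by
      rw [Nat.choose_succ_succ', Nat.cast_add]
    have habsorb :
        ((m + s + 1).choose (s + 1) : ℝ) * (s + 1) = (m + s + 1).choose s * (m + 1) := by
      have := Nat.choose_succ_right_eq (m + s + 1) s
      rw [show m + s + 1 - s = m + 1 by omega] at this
      exact_mod_cast this
    rw [show m + 1 + s = m + s + 1 by omega, hpascal]
    linear_combination x ^ (s + 1) * (1 - x) ^ m * habsorb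

lemma mul_integral_pow_mul_one_sub_pow (s m : ℕ) (x : ℝ) :
    (s + 1) * (m + s + 1).choose (s + 1) * ∫ u in (0 : ℝ)..x, u ^ s * (1 - u) ^ m
      = ∑ t ∈ range (m + 1), ((t + s).choose s : ℝ) * x ^ (s + 1) * (1 - x) ^ t := by
  rw [← intervalIntegral.integral_const_mul, integral_eq_sub_of_hasDerivAt
    (fun y _ => hasDerivAt_sum_choose_mul_pow s m y)
    ((by fun_prop : Continuous _).intervalIntegrable _ _)]
  simp

lemma regIncBeta_succ_succ (s m : ℕ) (x : ℝ) :
    regIncBeta x (s + 1) (m + 1)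
      = ∑ t ∈ range (m + 1), ((t + s).choose s : ℝ) * x ^ (s + 1) * (1 - x) ^ t := by
  have hc : ((s : ℝ) + 1) * (m + s + 1).choose (s + 1) ≠ 0 :=
    mul_ne_zero (by positivity) (Nat.cast_ne_zero.2 (Nat.choose_pos (by omega)).ne')
  have h₁ := mul_integral_pow_mul_one_sub_pow s m 1
  simp only [one_pow, sub_self, mul_one] at h₁
  rw [regIncBeta, Nat.add_sub_cancel, Nat.add_sub_cancel, ← mul_div_mul_left _ _ hc,
    mul_integral_pow_mul_one_sub_pow, h₁]
  simp [sum_range_succ']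

lemma integral_pow_mul_one_sub_pow_pos (a b : ℕ) :
    0 < ∫ u in (0 : ℝ)..1, u ^ a * (1 - u) ^ b :=
  intervalIntegral_pos_of_pos_on ((by fun_prop : Continuous _).intervalIntegrable _ _)
    (fun u hu => mul_pos (pow_pos hu.1 a) (pow_pos (sub_pos.2 hu.2) b)) one_pos

lemma integral_pow_mul_one_sub_pow_reflect (a b : ℕ) (y : ℝ) :
    ∫ u in (0 : ℝ)..y, u ^ b * (1 - u) ^ a = ∫ u in (1 - y)..1, u ^ a * (1 - u) ^ b := by
  have := integral_comp_sub_left (fun u : ℝ => u ^ b * (1 - u) ^ a) (a := 1 - y) (b := 1) 1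
  simp only [sub_sub_cancel, sub_self] at this
  rw [← this]
  exact integral_congr fun u _ => mul_comm _ _

lemma regIncBeta_one_sub (x : ℝ) (a b : ℕ) : regIncBeta (1 - x) b a = 1 - regIncBeta x a b := by
  have hB := (integral_pow_mul_one_sub_pow_pos (a - 1) (b - 1)).ne'
  have hint (c : ℝ) :
      IntervalIntegrable (fun u : ℝ => u ^ (a - 1) * (1 - u) ^ (b - 1)) volume 0 c :=
    (by fun_prop : Continuous _).intervalIntegrable _ _
  rw [regIncBeta, regIncBeta, integral_pow_mul_one_sub_pow_reflect,
    integral_pow_mul_one_sub_pow_reflect, sub_sub_cancel, sub_self,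
    ← integral_interval_sub_left (hint 1) (hint x), sub_div, div_self hB]

lemma sum_range_nbPmf_eq_regIncBeta {r n : ℕ} (hr : 1 ≤ r) (hrn : r ≤ n) (θ : ℝ) :
    ∑ j ∈ range (n + 1), nbPmf r θ j = regIncBeta θ r (n + 1 - r) := by
  obtain ⟨s, rfl⟩ := Nat.exists_eq_add_of_le' hr
  obtain ⟨m, rfl⟩ := Nat.exists_eq_add_of_le hrn
  rw [show s + 1 + m + 1 - (s + 1) = m + 1 by omega, regIncBeta_succ_succ,
    show s + 1 + m + 1 = m + 1 + (s + 1) by omega, ← sum_range_nbPmf_add le_rfl]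
  simp only [nbPmf_add_succ]

/-- For `M_k ~ NB(k+1, θ)`, `N ≥ k+1` and `M* = min(M_k, N)`,
`E((M*)²) = N² · I_{1−θ}(N−k, k+1) + ((k+1)(k+2)/θ²) · I_θ(k+3, N−k)
  − ((k+1)/θ) · I_θ(k+2, N−k)`. -/
theorem second_moment_formula (k N : ℕ) (hN : k + 1 ≤ N) (θ : ℝ) (hθ0 : 0 < θ) (hθ1 : θ < 1) :
    (∑' j : ℕ, (min j N : ℝ) ^ 2 * nbPmf (k + 1) θ j)
      = (N : ℝ) ^ 2 * regIncBeta (1 - θ) (N - k) (k + 1)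
        + ((k + 1) * (k + 2) / θ ^ 2) * regIncBeta θ (k + 3) (N - k)
        - ((k + 1) / θ) * regIncBeta θ (k + 2) (N - k) := by
  have hp := hasSum_nbPmf k (abs_sub_lt_iff.2 ⟨by linarith, by linarith⟩ : |1 - θ| < 1)
  have htrunc := tsum_comp_min_mul (fun n : ℕ => (n : ℝ) ^ 2) hp N
  have hhead := sum_range_sq_mul_nbPmf k N θ
  simp only [Nat.cast_min] at htrunc
  rw [sum_range_nbPmf_eq_regIncBeta (by omega) (by omega),
    sum_range_nbPmf_eq_regIncBeta (by omega) (by omega),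
    show N + 2 + 1 - (k + 3) = N - k by omega,
    show N + 1 + 1 - (k + 2) = N - k by omega] at hhead
  rw [htrunc, sum_range_nbPmf_eq_regIncBeta (by omega) hN, show N + 1 - (k + 1) = N - k by omega,
    ← regIncBeta_one_sub]
  field_simp
  linear_combination hhead
end

section
/- Let M ~ NB(k+1, θ) with k ≥ 1. Then E(((k+1)/(M−1)) · 1[M ≤ N]) = θ · ((k+1)/k) · P(M̃ ≤ N−1), where M̃ ~ NB(k, θ) and N ≥ k+1. -/
/-- For `M ~ NB(k+1, θ)` with `k ≥ 1` and `N ≥ k+1`,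
`E(((k+1)/(M−1)) · 1[M ≤ N]) = θ · ((k+1)/k) · P(M̃ ≤ N−1)` where `M̃ ~ NB(k, θ)`. -/
theorem negBinomial_truncated_inverse_moment (k N : ℕ) (hk : 1 ≤ k) (hN : k + 1 ≤ N)
    (θ : ℝ) (hθ0 : 0 < θ) (hθ1 : θ < 1) :
    (∑ j ∈ Finset.Icc (k + 1) N, ((k + 1 : ℝ) / ((j : ℝ) - 1)) * nbPmf (k + 1) θ j)
      = θ * ((k + 1 : ℝ) / k) * ∑ j ∈ Finset.Icc k (N - 1), nbPmf k θ j := by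
  rw [Finset.mul_sum]
  rw [show Finset.Icc (k+1) N = Finset.map (addRightEmbedding 1) (Finset.Icc k (N-1)) by
    rw [Finset.map_add_right_Icc]; congr 1; omega]
  rw [Finset.sum_map]
  apply Finset.sum_congr rfl
  intro i hi
  simp only [Finset.mem_Icc] at hi
  obtain ⟨hik, _⟩ := hi
  simp only [addRightEmbedding_apply]
  unfold nbPmf
  rw [if_pos (by omega), if_pos (by omega)]
  have h3 : i + 1 - (k+1) = i - k := by omega
  have key : (i : ℝ) * ((i-1).choose (k-1)) = k * (i.choose k) := by
    have h := Nat.add_one_mul_choose_eq (i-1) (k-1)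
    have hi1 : i - 1 + 1 = i := by omega
    have hk1 : k - 1 + 1 = k := by omega
    simp only [Nat.succ_eq_add_one, hi1, hk1] at h
    have := congrArg (fun n : ℕ => (n : ℝ)) h
    push_cast at this ⊢
    linarith
  have hi0 : (i : ℝ) ≠ 0 := by
    have : 0 < i := by omega
    exact_mod_cast this.ne'
  have hk0 : (k : ℝ) ≠ 0 := by
    exact_mod_cast (show 0 < k by omega).ne'
  simp only [Nat.add_sub_cancel, h3]
  push_cast [show i - 1 + 1 = i from by omega]
  rw [add_sub_cancel_right]
  field_simp
  linear_combination -θ * θ^k * (1-θ)^(i-k) * key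
end

section
/- Let M ~ NB(k+1, θ) with k ≥ 2 and N ≥ k+1. Then E(((k+1)²/((M−1)(M−2))) · 1[M ≤ N]) = θ² · ((k+1)²/(k(k−1))) · P(M̃ ≤ N−2), where M̃ ~ NB(k−1, θ). -/
lemma choose_aux (i m : ℕ) :
    (i+m+2).choose (m+2) * ((m+2)*(m+1)) = (i+m).choose m * ((i+m+2)*(i+m+1)) := by
  have h1 := Nat.add_one_mul_choose_eq (i+m+1) (m+1)
  have h2 := Nat.add_one_mul_choose_eq (i+m) m
  nlinarith [h1, h2]

lemma real_aux (i m : ℕ) (θ : ℝ) :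
    ((m:ℝ)+3)^2 / (((i:ℝ)+m+2) * ((i:ℝ)+m+1)) * (((i+m+2).choose (m+2) : ℝ) * θ^(m+3) * (1-θ)^i)
    = θ^2 * (((m:ℝ)+3)^2 / (((m:ℝ)+2)*((m:ℝ)+1))) * (((i+m).choose m : ℝ) * θ^(m+1) * (1-θ)^i) := by
  have key : ((i+m+2).choose (m+2) : ℝ) * ((m+2)*(m+1))
      = ((i+m).choose m : ℝ) * ((i+m+2)*(i+m+1)) := by exact_mod_cast choose_aux i m
  have h1 : ((i:ℝ)+m+2) ≠ 0 := by positivity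
  have h2 : ((i:ℝ)+m+1) ≠ 0 := by positivity
  have h3 : ((m:ℝ)+2) ≠ 0 := by positivity
  have h4 : ((m:ℝ)+1) ≠ 0 := by positivity
  field_simp
  linear_combination (θ^(m+1) * θ^2 * (1-θ)^i) * key

/-- For `M ~ NB(k+1, θ)` with `k ≥ 2` and `N ≥ k+1`,
`E(((k+1)²/((M−1)(M−2))) · 1[M ≤ N]) = θ² · ((k+1)²/(k(k−1))) · P(M̃ ≤ N−2)`
where `M̃ ~ NB(k−1, θ)`. -/
theorem negBinomial_truncated_inverse_second_moment (k N : ℕ) (hk : 2 ≤ k) (hN : k + 1 ≤ N)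
    (θ : ℝ) (hθ0 : 0 < θ) (hθ1 : θ < 1) :
    (∑ j ∈ Finset.Icc (k + 1) N,
        ((k + 1 : ℝ) ^ 2 / (((j : ℝ) - 1) * ((j : ℝ) - 2))) * nbPmf (k + 1) θ j)
      = θ ^ 2 * ((k + 1 : ℝ) ^ 2 / ((k : ℝ) * ((k : ℝ) - 1)))
          * ∑ j ∈ Finset.Icc (k - 1) (N - 2), nbPmf (k - 1) θ j := by
  have hre : ∑ j ∈ Finset.Icc (k-1) (N-2), nbPmf (k-1) θ j
      = ∑ j ∈ Finset.Icc (k+1) N, nbPmf (k-1) θ (j-2) := by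
    rw [show k+1 = (k-1)+2 by omega, show N = (N-2)+2 by omega,
      ← Finset.map_add_right_Icc, Finset.sum_map]
    simp [addRightEmbedding]
  rw [hre, Finset.mul_sum]
  apply Finset.sum_congr rfl
  intro j hj
  simp only [Finset.mem_Icc] at hj
  obtain ⟨i, rfl⟩ : ∃ i, j = i + k + 1 := ⟨j - k - 1, by omega⟩
  obtain ⟨m, rfl⟩ : ∃ m, k = m + 2 := ⟨k-2, by omega⟩
  rw [nbPmf, nbPmf, if_pos (by omega), if_pos (by omega)]
  have e1 : i + (m+2) + 1 - 1 = i + m + 2 := by omega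
  have e2 : i + (m+2) + 1 - (m + 2 + 1) = i := by omega
  have e3 : i + (m+2) + 1 - 2 - 1 = i + m := by omega
  have e4 : m + 2 + 1 - 1 = m + 2 := by omega
  have e5 : m + 2 - 1 - 1 = m := by omega
  have e6 : i + (m+2) + 1 - 2 - (m + 2 - 1) = i := by omega
  rw [e1, e2, e3, e4, e5, e6, show m+2+1 = m+3 from rfl, show m+2-1 = m+1 from rfl]
  have := real_aux i m θ
  push_cast at this ⊢
  linear_combination this
end
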